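/- Let U and V be finite nonempty subsets of a commutative group and M ≥ 1 a parameter. Define V_d = V ∩ (d+U) for d ∈ V−U, and let P = {d ∈ V−U : |V_d| ≥ |U||V|/(2|U+V|)}. If |V_d| ≤ M|U||V|/|U+V| for every d ∈ P, then |P| ≥ |U+V|/(2M²). -/

import Mathlib

/-!
Write `r(d) = |V ∩ (d + U)|` for the number of representations `d = v - u`. Then `∑ r(d) = |U||V|`
and `∑ r(d)² = E(V, -U) = E(U, V) ≥ |U|²|V|²/|U + V|` by Cauchy–Schwarz. The differences with
`r(d) < |U||V|/(2|U + V|)` contribute at most half of this lower bound to `∑ r(d)²`, and each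
popular difference at most `(M|U||V|/|U + V|)²`, so there are at least `|U + V|/(2M²)` of them.
-/

open Finset Pointwise
open scoped Classical Combinatorics.Additive

namespace Finset

variable {G : Type*} [DecidableEq G]

lemma sum_addConvolution [AddGroup G] (A B : Finset G) :
    ∑ x ∈ A + B, A.addConvolution B x = #A * #B := by
  simp_rw [← card_add_eq]
  rw [sum_card_fiberwise_eq_card_filter, filter_true_of_mem, card_product]
  rintro ⟨a, b⟩ hab
  rw [mem_product] at hab
  exact add_mem_add hab.1 hab.2

lemma sum_addConvolution_sq [AddGroup G] (A B : Finset G) :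
    ∑ x ∈ A + B, A.addConvolution B x ^ 2 = E[A, B] :=
  (addEnergy_eq_sum_sq' A B).symm

lemma addEnergy_neg_right [AddCommGroup G] (A B : Finset G) : E[A, -B] = E[A, B] := by
  refine card_nbij' (fun x => (x.1, -x.2.2, -x.2.1)) (fun x => (x.1, -x.2.2, -x.2.1))
    ?_ ?_ (by simp [Set.LeftInvOn]) (by simp [Set.LeftInvOn]) <;>
  · rintro ⟨⟨a₁, a₂⟩, b₁, b₂⟩
    simp only [coe_filter, mem_product, mem_neg', neg_neg, Set.mem_ofPred_eq, ← sub_eq_add_neg,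
      sub_eq_sub_iff_add_eq_add]
    tauto

end Finset

section Popular

variable {ι 𝕜 : Type*} [Field 𝕜] [LinearOrder 𝕜] [IsStrictOrderedRing 𝕜]

lemma sum_sq_le_card_filter_mul_sq_add (s : Finset ι) (f : ι → 𝕜) (hf : ∀ i ∈ s, 0 ≤ f i)
    {t b : 𝕜} (ht : 0 ≤ t) (hb : ∀ i ∈ s, t ≤ f i → f i ≤ b) :
    ∑ i ∈ s, f i ^ 2 ≤ #{i ∈ s | t ≤ f i} * b ^ 2 + t * ∑ i ∈ s, f i := by
  rw [← sum_filter_add_sum_filter_not s (fun i => t ≤ f i)]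
  gcongr ?_ + ?_
  · rw [← nsmul_eq_mul, ← sum_const]
    refine sum_le_sum fun i hi => ?_
    rw [mem_filter] at hi
    exact pow_le_pow_left₀ (hf i hi.1) (hb i hi.1 hi.2) 2
  · calc ∑ i ∈ s with ¬t ≤ f i, f i ^ 2
        ≤ ∑ i ∈ s with ¬t ≤ f i, t * f i := by
          refine sum_le_sum fun i hi => ?_
          rw [mem_filter, not_le] at hi
          rw [sq]
          exact mul_le_mul_of_nonneg_right hi.2.le (hf i hi.1)
      _ ≤ t * ∑ i ∈ s, f i := by
          rw [← mul_sum]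
          exact mul_le_mul_of_nonneg_left (sum_le_sum_of_subset_of_nonneg (filter_subset _ _)
            fun i hi _ => hf i hi) ht

lemma div_le_card_popular (s : Finset ι) (f : ι → 𝕜) (hf : ∀ i ∈ s, 0 ≤ f i)
    {S K M : 𝕜} (hS : 0 < S) (hK : 0 < K) (hsum : ∑ i ∈ s, f i = S)
    (hsq : S ^ 2 ≤ K * ∑ i ∈ s, f i ^ 2) (hb : ∀ i ∈ s, S / (2 * K) ≤ f i → f i ≤ M * S / K) :
    K / (2 * M ^ 2) ≤ #{i ∈ s | S / (2 * K) ≤ f i} := by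
  have key := sum_sq_le_card_filter_mul_sq_add s f hf (by positivity) hb
  rw [hsum] at key
  set P : 𝕜 := (#{i ∈ s | S / (2 * K) ≤ f i} : 𝕜)
  have hK_le : K ≤ P * (2 * M ^ 2) := by
    have := hsq.trans (mul_le_mul_of_nonneg_left key hK.le)
    field_simp at this
    linarith
  exact div_le_of_le_mul₀ (by positivity) (by positivity) hK_le

end Popular

theorem popular_difference_count_general {G : Type*} [AddCommGroup G] [DecidableEq G]
    (U V : Finset G) (hU : U.Nonempty) (hV : V.Nonempty) (M : ℝ)
    (hbound : ∀ d ∈ V - U,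
      ((V ∩ ({d} + U)).card : ℝ) ≥ (U.card : ℝ) * V.card / (2 * (U + V).card) →
      ((V ∩ ({d} + U)).card : ℝ) ≤ M * U.card * V.card / (U + V).card) :
    (((V - U).filter (fun d =>
        ((V ∩ ({d} + U)).card : ℝ) ≥ (U.card : ℝ) * V.card / (2 * (U + V).card))).card : ℝ)
      ≥ ((U + V).card : ℝ) / (2 * M ^ 2) := by
  have hrep (d : G) : #(V ∩ ({d} + U)) = V.addConvolution (-U) d := by
    rw [singleton_add, card_inter_vadd]
  simp only [hrep] at hbound ⊢
  rw [sub_eq_add_neg] at hbound ⊢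
  have hK : (0 : ℝ) < #(U + V) := by exact_mod_cast (hU.add hV).card_pos
  have hS : (0 : ℝ) < #U * #V := by exact_mod_cast Nat.mul_pos hU.card_pos hV.card_pos
  refine div_le_card_popular _ _ (fun _ _ => by positivity) hS hK ?_ ?_
    fun d hd h => (hbound d hd h).trans_eq (by ring)
  · rw [← Nat.cast_sum, sum_addConvolution, card_neg, mul_comm, Nat.cast_mul]
  · have henergy := le_card_add_mul_addEnergy U V
    rw [← addEnergy_comm, ← addEnergy_neg_right, ← sum_addConvolution_sq] at henergy
    exact_mod_cast (mul_pow _ _ 2).trans_le henergy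

theorem popular_difference_count {G : Type*} [AddCommGroup G] [DecidableEq G]
    (U V : Finset G) (hU : U.Nonempty) (hV : V.Nonempty) (M : ℝ) (hM : 1 ≤ M)
    (hbound : ∀ d ∈ V - U,
      ((V ∩ ({d} + U)).card : ℝ) ≥ (U.card : ℝ) * V.card / (2 * (U + V).card) →
      ((V ∩ ({d} + U)).card : ℝ) ≤ M * U.card * V.card / (U + V).card) :
    (((V - U).filter (fun d =>
        ((V ∩ ({d} + U)).card : ℝ) ≥ (U.card : ℝ) * V.card / (2 * (U + V).card))).card : ℝ)
      ≥ ((U + V).card : ℝ) / (2 * M ^ 2) :=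
  popular_difference_count_general U V hU hV M hbound
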